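/- arXiv:2208.05400 — 4 statements merged into one kernel-verified Lean document; each statement's English description precedes it below -/
import Mathlib

section
/- For every pair (a,b) of initial data in the energy space there exist two lacunary pairs (a¹,b¹) and (a²,b²) in the energy space such that a_i = a¹_i + a²_i and b_i = b¹_i + b²_i for every i ≥ 1. -/
open Filter Set

/-- Derivative from within the half line `[0, ∞)`. -/
noncomputable def derIci (f : ℝ → ℝ) : ℝ → ℝ := derivWithin f (Set.Ici (0 : ℝ))

/-- The pair `(a, b)` belongs to the energy space `D(A^{1/2}) × H`. -/
def InEnergy (lam a b : ℕ → ℝ) : Prop :=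
  Summable fun i => (b i) ^ 2 + (lam i) ^ 2 * (a i) ^ 2

/-- `R_k(a,b) = Σ_{i>k} (b_i² + λ_i² a_i²)`. -/
noncomputable def Rk (lam a b : ℕ → ℝ) (k : ℕ) : ℝ :=
  ∑' i : ℕ, if k < i then (b i) ^ 2 + (lam i) ^ 2 * (a i) ^ 2 else 0

/-- Lacunary (spectral gap) data: `R_k(a,b)·k²·exp(k λ_k) ≤ 1` for infinitely many
positive integers `k`. -/
def Lacunary (lam a b : ℕ → ℝ) : Prop :=
  InEnergy lam a b ∧
    {k : ℕ | 0 < k ∧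
      Rk lam a b k * (k : ℝ) ^ 2 * Real.exp ((k : ℝ) * lam k) ≤ 1}.Infinite

/-- `M(σ) = ∫₀^σ m(s) ds`. -/
noncomputable def Mfun (m : ℝ → ℝ) (σ : ℝ) : ℝ := ∫ s in (0:ℝ)..σ, m s

/-- The conserved quantity `H₀ = Σ_i b_i² + M(Σ_i λ_i² a_i²)`. -/
noncomputable def H0 (lam : ℕ → ℝ) (m : ℝ → ℝ) (a b : ℕ → ℝ) : ℝ :=
  (∑' i, (b i) ^ 2) + Mfun m (∑' i, (lam i) ^ 2 * (a i) ^ 2)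

/-- Galerkin approximation of order `n` (components of index `> n` extended by zero):
the solution of `v_i'' + m(Σ_{j≤n} λ_j² v_j²) λ_i² v_i = 0` for `i ≤ n`, with
`v_i(0) = a_i`, `v_i'(0) = b_i`. -/
def GalerkinSol (lam : ℕ → ℝ) (m : ℝ → ℝ) (a b : ℕ → ℝ) (n : ℕ)
    (v : ℕ → ℝ → ℝ) : Prop :=
  (∀ i, ContDiffOn ℝ 2 (v i) (Set.Ici 0)) ∧
  (∀ i ≤ n, v i 0 = a i) ∧
  (∀ i ≤ n, derIci (v i) 0 = b i) ∧
  (∀ i, n < i → ∀ t, v i t = 0) ∧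
  (∀ i ≤ n, ∀ t, 0 ≤ t →
    derIci (derIci (v i)) t
      + m (∑ j ∈ Finset.range (n + 1), (lam j) ^ 2 * (v j t) ^ 2)
        * (lam i) ^ 2 * v i t = 0)

/-- Global weak solution with initial data `(a,b)`: a family `v_i ∈ C²([0,∞))` with
`v_i(0) = a_i`, `v_i'(0) = b_i`, such that `Σ v_i'(t)²` and `Σ λ_i² v_i(t)²` converge,
the maps `t ↦ (v_i'(t))_i` and `t ↦ (λ_i v_i(t))_i` are continuous from `[0,∞)` into
`ℓ²`, and `v_i'' + m(Σ_j λ_j² v_j²) λ_i² v_i = 0` for every `i` and every `t ≥ 0`. -/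
def WeakSol (lam : ℕ → ℝ) (m : ℝ → ℝ) (a b : ℕ → ℝ) (v : ℕ → ℝ → ℝ) : Prop :=
  (∀ i, ContDiffOn ℝ 2 (v i) (Set.Ici 0)) ∧
  (∀ i, v i 0 = a i) ∧
  (∀ i, derIci (v i) 0 = b i) ∧
  (∀ t, 0 ≤ t → Summable fun i => (derIci (v i) t) ^ 2) ∧
  (∀ t, 0 ≤ t → Summable fun i => (lam i) ^ 2 * (v i t) ^ 2) ∧
  (∀ t₀, 0 ≤ t₀ → Tendsto (fun t => ∑' i, (derIci (v i) t - derIci (v i) t₀) ^ 2)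
      (nhdsWithin t₀ (Set.Ici 0)) (nhds 0)) ∧
  (∀ t₀, 0 ≤ t₀ → Tendsto (fun t => ∑' i, (lam i) ^ 2 * (v i t - v i t₀) ^ 2)
      (nhdsWithin t₀ (Set.Ici 0)) (nhds 0)) ∧
  (∀ i, ∀ t, 0 ≤ t →
    derIci (derIci (v i)) t
      + m (∑' j, (lam j) ^ 2 * (v j t) ^ 2) * (lam i) ^ 2 * v i t = 0)

/-!
Since the energy density `b_i² + λ_i² a_i²` is summable, its tails tend to zero, so one can pick
indices `n₀ < n₁ < n₂ < …` with the tail beyond `n_{j+1}` below the threshold demanded at `n_j`.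
Put the components with index in the even blocks `(n_j, n_{j+1}]` into the first pair and the
rest into the second. Each pair vanishes on every other block, so at the left end `n_j` of such a
block its tail is the tail beyond `n_{j+1}`, which is small enough.
-/

open Topology

noncomputable def tailSum (f : ℕ → ℝ) (k : ℕ) : ℝ := ∑' i, (Ioi k).indicator f i

section TailSum

variable {f : ℕ → ℝ}

theorem tailSum_eq_tsum_nat_add (hf : Summable f) (k : ℕ) :
    tailSum f k = ∑' i, f (i + (k + 1)) := by
  rw [tailSum, ← (hf.indicator (Ioi k)).sum_add_tsum_nat_add (k + 1),
    Finset.sum_eq_zero fun i hi => indicator_of_notMem (by simp_all) f, zero_add]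
  exact tsum_congr fun i => indicator_of_mem (by simp only [mem_Ioi]; omega) f

theorem tendsto_tailSum (hf : Summable f) : Tendsto (tailSum f) atTop (𝓝 0) :=
  ((tendsto_sum_nat_add f).comp (tendsto_add_atTop_nat 1)).congr fun k =>
    (tailSum_eq_tsum_nat_add hf k).symm

theorem tailSum_indicator_le_of_disjoint (hf0 : 0 ≤ f) (hf : Summable f) {T : Set ℕ} {k m : ℕ}
    (hT : Disjoint T (Ioc k m)) : tailSum (T.indicator f) k ≤ tailSum f m := by
  have hsub : Ioi k ∩ T ⊆ Ioi m := fun i ⟨hki, hiT⟩ =>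
    not_le.1 fun him => hT.notMem_of_mem_left hiT ⟨hki, him⟩
  refine Summable.tsum_le_tsum (fun i => ?_) ((hf.indicator T).indicator _) (hf.indicator _)
  rw [indicator_indicator]
  exact indicator_le_indicator_of_subset hsub hf0 i

theorem exists_tailSum_indicator_le (hf0 : 0 ≤ f) (hf : Summable f) {ε : ℕ → ℝ}
    (hε : ∀ k, 0 < ε k) :
    ∃ S : Set ℕ, {k | tailSum (S.indicator f) k ≤ ε k}.Infinite ∧
      {k | tailSum (Sᶜ.indicator f) k ≤ ε k}.Infinite := by
  have hnext : ∀ k, ∃ m, k < m ∧ tailSum f m ≤ ε k := fun k =>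
    ((eventually_gt_atTop k).and ((tendsto_tailSum hf).eventually (ge_mem_nhds (hε k)))).exists
  choose next hlt hle using hnext
  set n : ℕ → ℕ := fun j => next^[j] 0
  have hn : ∀ j, n (j + 1) = next (n j) := fun j => Function.iterate_succ_apply' next j 0
  have hmono : StrictMono n := strictMono_nat_of_lt_succ fun j => (hn j).symm ▸ hlt (n j)
  set S := ⋃ (j : ℕ) (_ : Even j), Ioc (n j) (n (j + 1))
  have hsmall : ∀ {T : Set ℕ} j, Disjoint T (Ioc (n j) (n (j + 1))) →
      n j ∈ {k | tailSum (T.indicator f) k ≤ ε k} := fun j hT =>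
    (tailSum_indicator_le_of_disjoint hf0 hf hT).trans (hn j ▸ hle (n j))
  refine ⟨S, infinite_of_injective_forall_mem (f := fun j => n (2 * j + 1)) ?_ fun j => ?_,
    infinite_of_injective_forall_mem (f := fun j => n (2 * j)) ?_ fun j => ?_⟩
  · exact (hmono.comp fun _ _ h => show 2 * _ + 1 < 2 * _ + 1 by omega).injective
  · refine hsmall _ (disjoint_iUnion_left.2 fun i => disjoint_iUnion_left.2 fun hi =>
      hmono.monotone.pairwise_disjoint_on_Ioc_succ ?_)
    rintro rfl
    exact Nat.not_even_two_mul_add_one j hi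
  · exact (hmono.comp fun _ _ h => show 2 * _ < 2 * _ by omega).injective
  · exact hsmall _ (disjoint_compl_left_iff_subset.2 <| subset_iUnion₂
      (s := fun j (_ : Even j) => Ioc (n j) (n (j + 1))) (2 * j) (even_two_mul j))

end TailSum

def energy (lam a b : ℕ → ℝ) (i : ℕ) : ℝ := b i ^ 2 + lam i ^ 2 * a i ^ 2

section Energy

variable {lam a b : ℕ → ℝ}

theorem energy_nonneg : 0 ≤ energy lam a b := fun i => by
  unfold energy
  positivity

theorem Rk_eq_tailSum (k : ℕ) : Rk lam a b k = tailSum (energy lam a b) k :=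
  tsum_congr fun i => by simp [indicator_apply, energy]

theorem energy_indicator (S : Set ℕ) :
    energy lam (S.indicator a) (S.indicator b) = S.indicator (energy lam a b) := by
  ext i
  by_cases hi : i ∈ S <;> simp [energy, hi]

theorem lacunary_indicator (hab : InEnergy lam a b) (S : Set ℕ)
    (hS : {k : ℕ | tailSum (S.indicator (energy lam a b)) k ≤
      ((k : ℝ) ^ 2 * Real.exp (k * lam k) + 1)⁻¹}.Infinite) :
    Lacunary lam (S.indicator a) (S.indicator b) := by
  refine ⟨show Summable (energy lam _ _) from energy_indicator S ▸ hab.indicator S,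
    (hS.sdiff (finite_singleton 0)).mono ?_⟩
  rintro k ⟨hk, hk0 : k ≠ 0⟩
  refine ⟨Nat.pos_of_ne_zero hk0, ?_⟩
  set w := (k : ℝ) ^ 2 * Real.exp (k * lam k)
  have hw : 0 ≤ w := by positivity
  calc Rk lam (S.indicator a) (S.indicator b) k * (k : ℝ) ^ 2 * Real.exp (k * lam k)
      = tailSum (S.indicator (energy lam a b)) k * w := by
        rw [Rk_eq_tailSum, energy_indicator, mul_assoc]
    _ ≤ (w + 1)⁻¹ * w := mul_le_mul_of_nonneg_right hk hw
    _ ≤ 1 := by rw [inv_mul_le_iff₀ (by positivity)]; linarith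

end Energy

theorem stmt1_general (lam : ℕ → ℝ)
    (a b : ℕ → ℝ) (hab : InEnergy lam a b) :
    ∃ a₁ b₁ a₂ b₂ : ℕ → ℝ,
      Lacunary lam a₁ b₁ ∧ Lacunary lam a₂ b₂ ∧
      (∀ i, a i = a₁ i + a₂ i) ∧ (∀ i, b i = b₁ i + b₂ i) := by
  -- The `+ 1` keeps the threshold positive at `k = 0`, where the weight vanishes.
  obtain ⟨S, hS, hSc⟩ := exists_tailSum_indicator_le (f := energy lam a b)
    energy_nonneg hab (ε := fun k => ((k : ℝ) ^ 2 * Real.exp (k * lam k) + 1)⁻¹)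
    fun k => by positivity
  exact ⟨S.indicator a, S.indicator b, Sᶜ.indicator a, Sᶜ.indicator b,
    lacunary_indicator hab S hS, lacunary_indicator hab Sᶜ hSc,
    fun i => (indicator_self_add_compl_apply S a i).symm,
    fun i => (indicator_self_add_compl_apply S b i).symm⟩

/-- every pair of initial data in the energy space is the sum of two
lacunary pairs. -/
theorem stmt1 (lam : ℕ → ℝ) (hpos : ∀ i, 0 < lam i) (hmono : Monotone lam)
    (htop : Tendsto lam atTop atTop)
    (a b : ℕ → ℝ) (hab : InEnergy lam a b) :
    ∃ a₁ b₁ a₂ b₂ : ℕ → ℝ,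
      Lacunary lam a₁ b₁ ∧ Lacunary lam a₂ b₂ ∧
      (∀ i, a i = a₁ i + a₂ i) ∧ (∀ i, b i = b₁ i + b₂ i) :=
  stmt1_general lam a b hab
end

section
/- Assume that λ_{k+1} ≥ exp(k² λ_k) for infinitely many positive integers k. Then for every α > 0, every pair (a,b) of sequences with Σ_i (λ_i^{4α} b_i² + λ_i^{4α+2} a_i²) < ∞ (that is, every pair in D(A^{α+1/2}) × D(A^{α})) is lacunary. -/
open Filter Set

/-- if λ_{k+1} ≥ exp(k² λ_k) for infinitely many positive integers k, then
every pair in D(A^{α+1/2}) × D(A^α), α > 0, is lacunary. -/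
theorem stmt2 (lam : ℕ → ℝ) (hpos : ∀ i, 0 < lam i) (hmono : Monotone lam)
    (htop : Tendsto lam atTop atTop)
    (hgap : {k : ℕ | 0 < k ∧ Real.exp ((k : ℝ) ^ 2 * lam k) ≤ lam (k + 1)}.Infinite) :
    ∀ α : ℝ, 0 < α → ∀ a b : ℕ → ℝ,
      (Summable fun i =>
        (lam i) ^ (4 * α) * (b i) ^ 2 + (lam i) ^ (4 * α + 2) * (a i) ^ 2) →
      Lacunary lam a b := by
  intro α hα a b hS
  have h4a : (0:ℝ) < 4 * α := by linarith
  have hFnn : ∀ i, 0 ≤ (lam i) ^ (4 * α) * (b i) ^ 2 + (lam i) ^ (4 * α + 2) * (a i) ^ 2 :=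
    fun i => add_nonneg (mul_nonneg (Real.rpow_nonneg (hpos i).le _) (sq_nonneg _))
      (mul_nonneg (Real.rpow_nonneg (hpos i).le _) (sq_nonneg _))
  obtain ⟨N, hN⟩ := Filter.eventually_atTop.mp (htop.eventually_ge_atTop 1)
  have henn : ∀ i, 0 ≤ (b i) ^ 2 + (lam i) ^ 2 * (a i) ^ 2 :=
    fun i => add_nonneg (sq_nonneg _) (mul_nonneg (sq_nonneg _) (sq_nonneg _))
  have key : ∀ i, 1 ≤ lam i →
      (b i) ^ 2 + (lam i) ^ 2 * (a i) ^ 2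
        ≤ (lam i) ^ (4 * α) * (b i) ^ 2 + (lam i) ^ (4 * α + 2) * (a i) ^ 2 := by
    intro i hi
    have h1 : (1:ℝ) ≤ (lam i) ^ (4 * α) := Real.one_le_rpow hi h4a.le
    have h2 : (lam i) ^ (4 * α + 2) = (lam i) ^ (4 * α) * (lam i) ^ 2 := by
      rw [Real.rpow_add (hpos i), Real.rpow_two]
    rw [h2]
    nlinarith [sq_nonneg (b i), mul_nonneg (sq_nonneg (lam i)) (sq_nonneg (a i))]
  have hE : InEnergy lam a b := by
    rw [InEnergy, ← summable_nat_add_iff N]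
    apply Summable.of_nonneg_of_le (fun i => henn (i + N))
      (fun i => key (i + N) (hN (i + N) (Nat.le_add_left N i)))
    exact (summable_nat_add_iff N).mpr hS
  refine ⟨hE, ?_⟩
  have hRsum : ∀ k, Summable (fun i : ℕ =>
      if k < i then (b i) ^ 2 + (lam i) ^ 2 * (a i) ^ 2 else 0) := by
    intro k
    apply Summable.of_nonneg_of_le (fun i => ?_) (fun i => ?_) hE
    · split
      · exact henn i
      · exact le_rfl
    · split
      · exact le_rfl
      · exact henn i
  have hRnn : ∀ k, 0 ≤ Rk lam a b k := by
    intro k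
    apply tsum_nonneg
    intro i
    split <;> [exact henn i; exact le_rfl]
  set S : ℝ := ∑' i, ((lam i) ^ (4 * α) * (b i) ^ 2 + (lam i) ^ (4 * α + 2) * (a i) ^ 2)
    with hSdef
  have hSnn : 0 ≤ S := tsum_nonneg hFnn
  have hRk : ∀ k, N ≤ k → (lam (k+1)) ^ (4 * α) * Rk lam a b k ≤ S := by
    intro k hk
    rw [Rk, ← tsum_mul_left]
    apply Summable.tsum_le_tsum _ ((hRsum k).mul_left _) hS
    intro i
    split
    · rename_i hki
      have hle : lam (k+1) ≤ lam i := hmono hki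
      have h1 : (lam (k+1)) ^ (4 * α) ≤ (lam i) ^ (4 * α) :=
        Real.rpow_le_rpow (hpos _).le hle h4a.le
      have h2 : (lam i) ^ (4 * α + 2) = (lam i) ^ (4 * α) * (lam i) ^ 2 := by
        rw [Real.rpow_add (hpos i), Real.rpow_two]
      have h3 := mul_le_mul_of_nonneg_right h1 (henn i)
      rw [h2]
      nlinarith [h3]
    · simpa using hFnn i
  obtain ⟨C₁, hC₁⟩ := exists_nat_ge ((3 / lam 0 + 1) / (4 * α))
  obtain ⟨C₂, hC₂⟩ := exists_nat_ge S
  set C : ℕ := N + C₁ + C₂ + 1 with hC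
  apply Set.Infinite.mono (s := {k : ℕ | 0 < k ∧
      Real.exp ((k : ℝ) ^ 2 * lam k) ≤ lam (k + 1)} \ {k | k < C})
  swap
  · exact hgap.diff (Set.finite_lt_nat C)
  rintro k ⟨⟨hk0, hkgap⟩, hkC⟩
  simp only [Set.mem_setOf_eq, not_lt] at hkC
  refine ⟨hk0, ?_⟩
  have hkN : N ≤ k := by omega
  have hk1 : (1:ℝ) ≤ (k:ℝ) := by exact_mod_cast hk0
  have hkC₁ : (C₁ : ℝ) ≤ (k : ℝ) := by exact_mod_cast (by omega : C₁ ≤ k)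
  have h3 : 3 / lam 0 ≤ 4 * α * (k:ℝ) - 1 := by
    have := hC₁.trans hkC₁
    rw [div_le_iff₀ h4a] at this
    linarith
  have h3' : 3 ≤ (4 * α * (k:ℝ) - 1) * lam 0 := (div_le_iff₀ (hpos 0)).mp h3
  have hSk : S ≤ Real.exp (k:ℝ) := by
    have hk2 : S ≤ (k:ℝ) := hC₂.trans (by exact_mod_cast (by omega : C₂ ≤ k))
    have := Real.add_one_le_exp (k:ℝ)
    linarith
  set X : ℝ := (k:ℝ) ^ 2 * lam k * (4 * α) with hX
  set Y : ℝ := (k:ℝ) * lam k with hY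
  have hexp : Real.exp X ≤ (lam (k+1)) ^ (4 * α) := by
    rw [hX, Real.exp_mul]
    exact Real.rpow_le_rpow (Real.exp_pos _).le hkgap h4a.le
  have hRb : Real.exp X * Rk lam a b k ≤ S :=
    le_trans (mul_le_mul_of_nonneg_right hexp (hRnn k)) (hRk k hkN)
  have hRle : Rk lam a b k ≤ S * Real.exp (-X) := by
    rw [Real.exp_neg, mul_comm S, inv_mul_eq_div, le_div_iff₀ (Real.exp_pos _)]
    linarith [hRb]
  have hk2e : (k:ℝ) ^ 2 ≤ Real.exp (2 * (k:ℝ)) := by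
    have h := Real.add_one_le_exp (k:ℝ)
    have hknn : (0:ℝ) ≤ (k:ℝ) := Nat.cast_nonneg k
    have h2 : Real.exp (2 * (k:ℝ)) = Real.exp (k:ℝ) * Real.exp (k:ℝ) := by
      rw [two_mul, Real.exp_add]
    nlinarith [Real.exp_pos (k:ℝ)]
  have hL0 : lam 0 ≤ lam k := hmono (Nat.zero_le k)
  have hane : 0 ≤ 4 * α * (k:ℝ) - 1 :=
    le_trans (div_pos (by norm_num) (hpos 0)).le h3
  have hexpo : 2 * (k:ℝ) + Y - X ≤ -(k:ℝ) := by
    rw [hX, hY]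
    have hstep : 3 ≤ (4 * α * (k:ℝ) - 1) * lam k :=
      le_trans h3' (mul_le_mul_of_nonneg_left hL0 hane)
    have hstep2 : 3 * (k:ℝ) ≤ ((4 * α * (k:ℝ) - 1) * lam k) * (k:ℝ) :=
      mul_le_mul_of_nonneg_right hstep (by linarith)
    have hid : ((4 * α * (k:ℝ) - 1) * lam k) * (k:ℝ)
        = (k:ℝ) ^ 2 * lam k * (4 * α) - (k:ℝ) * lam k := by ring
    rw [hid] at hstep2
    linarith
  have step1 : Rk lam a b k * (k:ℝ) ^ 2 ≤ (S * Real.exp (-X)) * Real.exp (2 * (k:ℝ)) :=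
    mul_le_mul hRle hk2e (sq_nonneg _) (by positivity)
  have step2 : Rk lam a b k * (k:ℝ) ^ 2 * Real.exp Y
      ≤ S * Real.exp (-X) * Real.exp (2 * (k:ℝ)) * Real.exp Y :=
    mul_le_mul_of_nonneg_right step1 (Real.exp_pos _).le
  have heq : S * Real.exp (-X) * Real.exp (2 * (k:ℝ)) * Real.exp Y
      = S * Real.exp (2 * (k:ℝ) + Y - X) := by
    rw [mul_assoc, mul_assoc, ← Real.exp_add, ← Real.exp_add,
      show -X + (2 * (k:ℝ) + Y) = 2 * (k:ℝ) + Y - X from by ring]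
  have step3 : S * Real.exp (2 * (k:ℝ) + Y - X) ≤ Real.exp (k:ℝ) * Real.exp (-(k:ℝ)) :=
    mul_le_mul hSk (Real.exp_le_exp.mpr hexpo) (Real.exp_pos _).le (Real.exp_pos _).le
  have hone : Real.exp (k:ℝ) * Real.exp (-(k:ℝ)) = 1 := by
    rw [← Real.exp_add]; simp
  rw [hY] at step2
  linarith [step2, heq ▸ step3]
end

section
/- Let (a,b) be initial data in the energy space, let n > k be positive integers, let v^n be the Galerkin approximation of order n, and set φ(t) = Σ_{i=1}^k λ_i² v^n_i(t)². Then |φ'(t)| ≤ (H₀/ν₁)·λ_k for every t ≥ 0, where H₀ = Σ_i b_i² + M(Σ_i λ_i² a_i²) and ν₁ = min{1, μ₁}. -/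
open Filter Set

/-!
Along a Galerkin solution the energy `Σ v_i'² + M(Σ λ_i² v_i²)` is conserved; at `t = 0` it is
at most `H₀`, and since `M(σ) ≥ μ₁ σ` it dominates `ν₁ Σ_{i ≤ n} (v_i'² + λ_i² v_i²)`. On the
other hand `φ' = Σ_{i ≤ k} 2 λ_i² v_i v_i'`, and by AM-GM together with `λ_i ≤ λ_k` each term is
at most `λ_k (v_i'² + λ_i² v_i²)`.
-/

open Finset

section Mfun

open MeasureTheory intervalIntegral

variable {m : ℝ → ℝ}

lemma hasDerivWithinAt_Mfun (hm : ContinuousOn m (Ici 0)) {σ : ℝ} (hσ : 0 ≤ σ) :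
    HasDerivWithinAt (Mfun m) (m σ) (Ici 0) σ := by
  have hint : IntervalIntegrable m volume 0 σ :=
    (hm.mono (by simpa [uIcc_of_le hσ] using Set.Icc_subset_Ici_self)).intervalIntegrable
  rcases hσ.eq_or_lt with rfl | hσ
  · exact integral_hasDerivWithinAt_right hint
      ((hm.mono Ioi_subset_Ici_self).stronglyMeasurableAtFilter_nhdsWithin measurableSet_Ioi 0)
      ((hm 0 self_mem_Ici).mono Ioi_subset_Ici_self)
  · exact (integral_hasDerivAt_right hint
      ⟨Ici 0, Ici_mem_nhds hσ, hm.aestronglyMeasurable measurableSet_Ici⟩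
      (hm.continuousAt (Ici_mem_nhds hσ))).hasDerivWithinAt

lemma Mfun_le_Mfun (hm : ContinuousOn m (Ici 0)) (hnn : ∀ σ, 0 ≤ σ → 0 ≤ m σ) {σ₁ σ₂ : ℝ}
    (h₁ : 0 ≤ σ₁) (h₁₂ : σ₁ ≤ σ₂) : Mfun m σ₁ ≤ Mfun m σ₂ := by
  have hint : ∀ {x y : ℝ}, 0 ≤ x → x ≤ y → IntervalIntegrable m volume x y := fun hx hxy =>
    (hm.mono fun z hz => hx.trans (uIcc_of_le hxy ▸ hz).1).intervalIntegrable
  have hsplit : Mfun m σ₁ + ∫ s in σ₁..σ₂, m s = Mfun m σ₂ :=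
    integral_add_adjacent_intervals (hint le_rfl h₁) (hint h₁ h₁₂)
  have hrest : 0 ≤ ∫ s in σ₁..σ₂, m s := integral_nonneg h₁₂ fun s hs => hnn s (h₁.trans hs.1)
  linarith

lemma mul_le_Mfun (hm : ContinuousOn m (Ici 0)) {μ₁ : ℝ} (hlb : ∀ σ, 0 ≤ σ → μ₁ ≤ m σ)
    {σ : ℝ} (hσ : 0 ≤ σ) : μ₁ * σ ≤ Mfun m σ := by
  have hint : IntervalIntegrable m volume 0 σ :=
    (hm.mono (by simpa [uIcc_of_le hσ] using Set.Icc_subset_Ici_self)).intervalIntegrable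
  have h := integral_mono_on hσ intervalIntegrable_const hint fun s hs => hlb s hs.1
  rwa [intervalIntegral.integral_const, smul_eq_mul, sub_zero, mul_comm] at h

end Mfun

lemma hasDerivWithinAt_derIci {f : ℝ → ℝ} {n : WithTop ℕ∞} (hf : ContDiffOn ℝ n f (Ici 0))
    (hn : n ≠ 0) {t : ℝ} (ht : 0 ≤ t) : HasDerivWithinAt f (derIci f t) (Ici 0) t :=
  (hf.differentiableOn hn t ht).hasDerivWithinAt

noncomputable def weightedSqSum (c : ℕ → ℝ) (s : Finset ℕ) (v : ℕ → ℝ → ℝ) (t : ℝ) : ℝ :=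
  ∑ i ∈ s, c i * v i t ^ 2

lemma weightedSqSum_nonneg {c : ℕ → ℝ} (hc : ∀ i, 0 ≤ c i) (s : Finset ℕ) (v : ℕ → ℝ → ℝ)
    (t : ℝ) : 0 ≤ weightedSqSum c s v t :=
  sum_nonneg fun i _ => mul_nonneg (hc i) (sq_nonneg _)

lemma hasDerivWithinAt_weightedSqSum {c : ℕ → ℝ} {s : Finset ℕ} {v : ℕ → ℝ → ℝ} {v' : ℕ → ℝ}
    {S : Set ℝ} {t : ℝ} (hv : ∀ i ∈ s, HasDerivWithinAt (v i) (v' i) S t) :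
    HasDerivWithinAt (weightedSqSum c s v) (∑ i ∈ s, c i * (2 * v i t * v' i)) S t :=
  HasDerivWithinAt.fun_sum fun i hi =>
    (((hv i hi).fun_pow 2).const_mul (c i)).congr_deriv (by push_cast; ring)

lemma abs_sq_mul_two_mul_mul_le {l L x y : ℝ} (hl : 0 ≤ l) (hlL : l ≤ L) :
    |l ^ 2 * (2 * x * y)| ≤ L * (y ^ 2 + l ^ 2 * x ^ 2) := by
  have hamgm : |2 * (l * x) * y| ≤ (l * x) ^ 2 + y ^ 2 := by
    rw [abs_mul, abs_mul, abs_two, ← sq_abs (l * x), ← sq_abs y]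
    exact two_mul_le_add_sq _ _
  calc |l ^ 2 * (2 * x * y)| = l * |2 * (l * x) * y| := by
        rw [show l ^ 2 * (2 * x * y) = l * (2 * (l * x) * y) by ring, abs_mul, abs_of_nonneg hl]
    _ ≤ l * (y ^ 2 + l ^ 2 * x ^ 2) := by
        rw [show y ^ 2 + l ^ 2 * x ^ 2 = (l * x) ^ 2 + y ^ 2 by ring]
        exact mul_le_mul_of_nonneg_left hamgm hl
    _ ≤ L * (y ^ 2 + l ^ 2 * x ^ 2) := by gcongr

lemma abs_sum_sq_mul_two_mul_mul_le {lam : ℕ → ℝ} (hpos : ∀ i, 0 ≤ lam i) (hmono : Monotone lam)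
    {k n : ℕ} (hkn : k ≤ n) (x y : ℕ → ℝ) :
    |∑ i ∈ range (k + 1), lam i ^ 2 * (2 * x i * y i)|
      ≤ lam k * ∑ i ∈ range (n + 1), (y i ^ 2 + lam i ^ 2 * x i ^ 2) :=
  calc |∑ i ∈ range (k + 1), lam i ^ 2 * (2 * x i * y i)|
      ≤ ∑ i ∈ range (k + 1), lam k * (y i ^ 2 + lam i ^ 2 * x i ^ 2) :=
        (abs_sum_le_sum_abs _ _).trans <| sum_le_sum fun i hi =>
          abs_sq_mul_two_mul_mul_le (hpos i) (hmono (mem_range_succ_iff.mp hi))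
    _ ≤ ∑ i ∈ range (n + 1), lam k * (y i ^ 2 + lam i ^ 2 * x i ^ 2) :=
        sum_le_sum_of_subset_of_nonneg (range_subset_range.mpr (by omega))
          fun i _ _ => mul_nonneg (hpos k) (by positivity)
    _ = lam k * ∑ i ∈ range (n + 1), (y i ^ 2 + lam i ^ 2 * x i ^ 2) := (mul_sum _ _ _).symm

noncomputable def galerkinEnergy (lam : ℕ → ℝ) (m : ℝ → ℝ) (n : ℕ) (v : ℕ → ℝ → ℝ) (t : ℝ) : ℝ :=
  ∑ i ∈ range (n + 1), derIci (v i) t ^ 2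
    + Mfun m (weightedSqSum (fun i => lam i ^ 2) (range (n + 1)) v t)

lemma min_one_mul_le_galerkinEnergy {lam : ℕ → ℝ} {m : ℝ → ℝ} {μ₁ : ℝ}
    (hm : ContinuousOn m (Ici 0)) (hlb : ∀ σ, 0 ≤ σ → μ₁ ≤ m σ) (n : ℕ) (v : ℕ → ℝ → ℝ)
    (t : ℝ) :
    min 1 μ₁ * ∑ i ∈ range (n + 1), (derIci (v i) t ^ 2 + lam i ^ 2 * v i t ^ 2)
      ≤ galerkinEnergy lam m n v t := by
  set w := weightedSqSum (fun i => lam i ^ 2) (range (n + 1)) v t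
  have hw : 0 ≤ w := weightedSqSum_nonneg (fun i => sq_nonneg _) _ _ _
  have hkin : 0 ≤ ∑ i ∈ range (n + 1), derIci (v i) t ^ 2 := sum_nonneg fun i _ => sq_nonneg _
  have hkin_le := mul_le_of_le_one_left hkin (min_le_left 1 μ₁)
  have hpot_le := (mul_le_mul_of_nonneg_right (min_le_right 1 μ₁) hw).trans (mul_le_Mfun hm hlb hw)
  rw [sum_add_distrib, mul_add]
  exact add_le_add hkin_le hpot_le

namespace GalerkinSol

variable {lam : ℕ → ℝ} {m : ℝ → ℝ} {a b : ℕ → ℝ} {n : ℕ} {v : ℕ → ℝ → ℝ}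

lemma hasDerivWithinAt (hv : GalerkinSol lam m a b n v) (i : ℕ) {t : ℝ} (ht : 0 ≤ t) :
    HasDerivWithinAt (v i) (derIci (v i) t) (Ici 0) t :=
  hasDerivWithinAt_derIci (hv.1 i) (by norm_num) ht

lemma hasDerivWithinAt_derIci (hv : GalerkinSol lam m a b n v) (i : ℕ) {t : ℝ} (ht : 0 ≤ t) :
    HasDerivWithinAt (derIci (v i)) (derIci (derIci (v i)) t) (Ici 0) t :=
  _root_.hasDerivWithinAt_derIci ((hv.1 i).derivWithin (m := 1) (uniqueDiffOn_Ici 0) (by norm_num))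
    (by norm_num) ht

lemma hasDerivWithinAt_galerkinEnergy (hv : GalerkinSol lam m a b n v)
    (hm : ContinuousOn m (Ici 0)) {t : ℝ} (ht : 0 ≤ t) :
    HasDerivWithinAt (galerkinEnergy lam m n v) 0 (Ici 0) t := by
  have hw := fun s => weightedSqSum_nonneg (fun i => sq_nonneg (lam i)) (range (n + 1)) v s
  have hkin : HasDerivWithinAt (fun s => ∑ i ∈ range (n + 1), derIci (v i) s ^ 2)
      (∑ i ∈ range (n + 1), 2 * derIci (v i) t * derIci (derIci (v i)) t) (Ici 0) t := by
    have h : HasDerivWithinAt (fun s => ∑ i ∈ range (n + 1), (1 : ℕ → ℝ) i * derIci (v i) s ^ 2)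
        _ (Ici 0) t := hasDerivWithinAt_weightedSqSum fun i _ => hv.hasDerivWithinAt_derIci i ht
    simpa only [Pi.one_apply, one_mul] using h
  have hpot := (hasDerivWithinAt_Mfun hm (hw t)).comp t
    (hasDerivWithinAt_weightedSqSum fun i _ => hv.hasDerivWithinAt i ht) fun s _ => hw s
  refine (hkin.add hpot).congr_deriv ?_
  rw [mul_sum, ← sum_add_distrib]
  refine sum_eq_zero fun i hi => ?_
  have hode : derIci (derIci (v i)) t
      + m (weightedSqSum (fun j => lam j ^ 2) (range (n + 1)) v t) * lam i ^ 2 * v i t = 0 :=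
    hv.2.2.2.2 i (mem_range_succ_iff.mp hi) t ht
  linear_combination 2 * derIci (v i) t * hode

lemma galerkinEnergy_eq (hv : GalerkinSol lam m a b n v) (hm : ContinuousOn m (Ici 0))
    {t : ℝ} (ht : 0 ≤ t) : galerkinEnergy lam m n v t = galerkinEnergy lam m n v 0 :=
  constant_of_has_deriv_right_zero
    (fun _ hs => (hv.hasDerivWithinAt_galerkinEnergy hm hs.1).continuousWithinAt.mono
      Icc_subset_Ici_self)
    (fun _ hs => (hv.hasDerivWithinAt_galerkinEnergy hm hs.1).mono (Ici_subset_Ici.mpr hs.1))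
    t ⟨ht, le_rfl⟩

lemma galerkinEnergy_zero_le_H0 (hv : GalerkinSol lam m a b n v) (hm : ContinuousOn m (Ici 0))
    (hnn : ∀ σ, 0 ≤ σ → 0 ≤ m σ) (hab : InEnergy lam a b) :
    galerkinEnergy lam m n v 0 ≤ H0 lam m a b := by
  have hb2 : ∀ i, 0 ≤ b i ^ 2 := fun i => sq_nonneg _
  have ha2 : ∀ i, 0 ≤ lam i ^ 2 * a i ^ 2 := fun i => mul_nonneg (sq_nonneg _) (sq_nonneg _)
  have hkin : ∑ i ∈ range (n + 1), derIci (v i) 0 ^ 2 ≤ ∑' i, b i ^ 2 := by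
    rw [sum_congr rfl fun i hi => by rw [hv.2.2.1 i (mem_range_succ_iff.mp hi)]]
    exact (hab.of_nonneg_of_le hb2 fun i => le_add_of_nonneg_right (ha2 i)).sum_le_tsum _
      fun i _ => hb2 i
  have hpot : weightedSqSum (fun i => lam i ^ 2) (range (n + 1)) v 0
      ≤ ∑' i, lam i ^ 2 * a i ^ 2 := by
    rw [weightedSqSum, sum_congr rfl fun i hi => by rw [hv.2.1 i (mem_range_succ_iff.mp hi)]]
    exact (hab.of_nonneg_of_le ha2 fun i => le_add_of_nonneg_left (hb2 i)).sum_le_tsum _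
      fun i _ => ha2 i
  exact add_le_add hkin
    (Mfun_le_Mfun hm hnn (weightedSqSum_nonneg (fun i => sq_nonneg _) _ _ _) hpot)

lemma sum_le_H0_div (hv : GalerkinSol lam m a b n v) {μ₁ : ℝ} (hμ₁ : 0 < μ₁)
    (hm : ContinuousOn m (Ici 0)) (hlb : ∀ σ, 0 ≤ σ → μ₁ ≤ m σ) (hab : InEnergy lam a b)
    {t : ℝ} (ht : 0 ≤ t) :
    ∑ i ∈ range (n + 1), (derIci (v i) t ^ 2 + lam i ^ 2 * v i t ^ 2)
      ≤ H0 lam m a b / min 1 μ₁ := by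
  rw [le_div_iff₀' (lt_min one_pos hμ₁)]
  calc _ ≤ galerkinEnergy lam m n v t := min_one_mul_le_galerkinEnergy hm hlb n v t
    _ = galerkinEnergy lam m n v 0 := hv.galerkinEnergy_eq hm ht
    _ ≤ H0 lam m a b :=
        hv.galerkinEnergy_zero_le_H0 hm (fun σ hσ => hμ₁.le.trans (hlb σ hσ)) hab

end GalerkinSol

theorem stmt7_general (lam : ℕ → ℝ) (hpos : ∀ i, 0 < lam i) (hmono : Monotone lam)
    (μ₁ : ℝ) (hμ₁ : 0 < μ₁) (m : ℝ → ℝ)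
    (hm_reg : ContDiffOn ℝ 1 m (Set.Ici 0))
    (hm_lb : ∀ σ, 0 ≤ σ → μ₁ ≤ m σ)
    (a b : ℕ → ℝ) (hab : InEnergy lam a b)
    (k n : ℕ) (hkn : k < n)
    (v : ℕ → ℝ → ℝ) (hv : GalerkinSol lam m a b n v)
    (φ : ℝ → ℝ)
    (hφ : ∀ t, φ t = ∑ i ∈ Finset.range (k + 1), (lam i) ^ 2 * (v i t) ^ 2) :
    ∀ t, 0 ≤ t → |derIci φ t| ≤ (H0 lam m a b / min 1 μ₁) * lam k := by
  intro t ht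
  have hφ' : HasDerivWithinAt φ (∑ i ∈ range (k + 1), lam i ^ 2 * (2 * v i t * derIci (v i) t))
      (Ici 0) t := by
    rw [show φ = weightedSqSum (fun i => lam i ^ 2) (range (k + 1)) v from funext hφ]
    exact hasDerivWithinAt_weightedSqSum fun i _ => hv.hasDerivWithinAt i ht
  rw [derIci, hφ'.derivWithin (uniqueDiffOn_Ici 0 t ht), mul_comm _ (lam k)]
  calc _ ≤ lam k * ∑ i ∈ range (n + 1), (derIci (v i) t ^ 2 + lam i ^ 2 * v i t ^ 2) :=
        abs_sum_sq_mul_two_mul_mul_le (fun i => (hpos i).le) hmono hkn.le _ _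
    _ ≤ lam k * (H0 lam m a b / min 1 μ₁) := mul_le_mul_of_nonneg_left
        (hv.sum_le_H0_div hμ₁ hm_reg.continuousOn hm_lb hab ht) (hpos k).le

/-- bound on the time derivative of the low-frequency part
φ(t) = Σ_{i≤k} λ_i² v_i(t)² of a Galerkin approximation. -/
theorem stmt7 (lam : ℕ → ℝ) (hpos : ∀ i, 0 < lam i) (hmono : Monotone lam)
    (htop : Tendsto lam atTop atTop)
    (μ₁ : ℝ) (hμ₁ : 0 < μ₁) (m : ℝ → ℝ)
    (hm_reg : ContDiffOn ℝ 1 m (Set.Ici 0))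
    (hm_lb : ∀ σ, 0 ≤ σ → μ₁ ≤ m σ)
    (a b : ℕ → ℝ) (hab : InEnergy lam a b)
    (k n : ℕ) (hk : 0 < k) (hkn : k < n)
    (v : ℕ → ℝ → ℝ) (hv : GalerkinSol lam m a b n v)
    (φ : ℝ → ℝ)
    (hφ : ∀ t, φ t = ∑ i ∈ Finset.range (k + 1), (lam i) ^ 2 * (v i t) ^ 2) :
    ∀ t, 0 ≤ t → |derIci φ t| ≤ (H0 lam m a b / min 1 μ₁) * lam k :=
  stmt7_general lam hpos hmono μ₁ hμ₁ m hm_reg hm_lb a b hab k n hkn v hv φ hφ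
end

section
/- Let (v^n)_{n≥1} be a sequence of global weak solutions (with initial data (a^n, b^n) in the energy space), and suppose there exist a family of functions v_i : [0,∞) → ℝ and sequences a, b in the energy space with v_i(0) = a_i and such that for every T > 0: sup_{t∈[0,T]} [Σ_i ((v^n_i)'(t) − v_i'(t))² + Σ_i λ_i²(v^n_i(t) − v_i(t))²] → 0 as n → ∞, where the maps t ↦ (v_i'(t))_i and t ↦ (λ_i v_i(t))_i are continuous into ℓ² and v_i'(0) = b_i. Then (v_i)_{i≥1} is a global weak solution with initial data (a,b). -/
open Filter Set

/-!
A weak solution satisfies, componentwise, the integral identity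
`u_i'(t) = u_i'(0) - ∫₀ᵗ m(|A^{1/2} u(s)|²) λ_i² u_i(s) ds`, and conversely a family with the
regularity of a weak solution that satisfies it is one. Energy convergence, uniform on `[0, t]`,
yields pointwise convergence of `(V^n_i)'` and of `λ_i V^n_i`, convergence of `|A^{1/2} V^n|²`
(the squared `ℓ²` norm is continuous) and a bound on it uniform on `[0, t]`; dominated convergence
then carries the identity over to the limit `v`.
-/

open Topology MeasureTheory intervalIntegral

section SquareSummable

variable {ι : Type*} {x y : ι → ℝ}

lemma summable_abs_mul_of_summable_sq (hx : Summable fun i => x i ^ 2)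
    (hy : Summable fun i => y i ^ 2) : Summable fun i => |x i * y i| :=
  .of_nonneg_of_le (fun _ => abs_nonneg _)
    (fun i => by rw [abs_mul]; nlinarith [sq_nonneg (|x i| - |y i|), sq_abs (x i), sq_abs (y i)])
    (hx.add hy)

lemma summable_sq_sub (hx : Summable fun i => x i ^ 2) (hy : Summable fun i => y i ^ 2) :
    Summable fun i => (x i - y i) ^ 2 :=
  .of_nonneg_of_le (fun _ => sq_nonneg _) (fun i => by nlinarith [sq_nonneg (x i + y i)])
    ((hx.add hy).mul_left 2)

lemma abs_tsum_mul_le_sqrt_mul_sqrt (hx : Summable fun i => x i ^ 2)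
    (hy : Summable fun i => y i ^ 2) :
    |∑' i, x i * y i| ≤ √(∑' i, x i ^ 2) * √(∑' i, y i ^ 2) := by
  have habs := summable_abs_mul_of_summable_sq hx hy
  calc |∑' i, x i * y i| ≤ ∑' i, |x i * y i| := by
        simpa only [Real.norm_eq_abs] using norm_tsum_le_tsum_norm (f := fun i => x i * y i) habs
    _ ≤ √(∑' i, x i ^ 2) * √(∑' i, y i ^ 2) := by
        refine habs.tsum_le_of_sum_le fun s => ?_
        calc ∑ i ∈ s, |x i * y i| = ∑ i ∈ s, |x i| * |y i| := by simp only [abs_mul]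
          _ ≤ √(∑ i ∈ s, |x i| ^ 2) * √(∑ i ∈ s, |y i| ^ 2) := Real.sum_mul_le_sqrt_mul_sqrt ..
          _ ≤ √(∑' i, x i ^ 2) * √(∑' i, y i ^ 2) := by
            simp only [sq_abs]
            gcongr
            · exact hx.sum_le_tsum s fun _ _ => sq_nonneg _
            · exact hy.sum_le_tsum s fun _ _ => sq_nonneg _

lemma tsum_sq_le_two_mul_tsum_sq_sub_add (hx : Summable fun i => x i ^ 2)
    (hy : Summable fun i => y i ^ 2) :
    ∑' i, x i ^ 2 ≤ 2 * ∑' i, (x i - y i) ^ 2 + 2 * ∑' i, y i ^ 2 := by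
  have hsum := ((summable_sq_sub hx hy).mul_left 2).add (hy.mul_left 2)
  rw [← tsum_mul_left, ← tsum_mul_left, ← Summable.tsum_add ((summable_sq_sub hx hy).mul_left 2)
    (hy.mul_left 2)]
  exact hx.tsum_le_tsum (fun i => by nlinarith [sq_nonneg (x i - 2 * y i)]) hsum

lemma abs_tsum_sq_sub_tsum_sq_le (hx : Summable fun i => x i ^ 2)
    (hy : Summable fun i => y i ^ 2) :
    |∑' i, x i ^ 2 - ∑' i, y i ^ 2| ≤
      ∑' i, (x i - y i) ^ 2 + 2 * (√(∑' i, (x i - y i) ^ 2) * √(∑' i, y i ^ 2)) := by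
  have hd := summable_sq_sub hx hy
  have hdy := (summable_abs_mul_of_summable_sq hd hy).of_abs
  have hsplit : ∑' i, x i ^ 2 - ∑' i, y i ^ 2 =
      ∑' i, (x i - y i) ^ 2 + 2 * ∑' i, (x i - y i) * y i := by
    rw [← tsum_mul_left, ← hd.tsum_add (hdy.mul_left 2), ← hx.tsum_sub hy]
    exact tsum_congr fun i => by ring
  rw [hsplit]
  refine (abs_add_le _ _).trans
    (add_le_add (abs_of_nonneg (tsum_nonneg fun _ => sq_nonneg _)).le ?_)
  rw [abs_mul, abs_two]
  exact mul_le_mul_of_nonneg_left (abs_tsum_mul_le_sqrt_mul_sqrt hd hy) zero_le_two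

variable {α : Type*} {l : Filter α} {X : α → ι → ℝ}

lemma tendsto_tsum_sq_of_tendsto_tsum_sq_sub (hX : ∀ᶠ n in l, Summable fun i => X n i ^ 2)
    (hy : Summable fun i => y i ^ 2) (h : Tendsto (fun n => ∑' i, (X n i - y i) ^ 2) l (𝓝 0)) :
    Tendsto (fun n => ∑' i, X n i ^ 2) l (𝓝 (∑' i, y i ^ 2)) := by
  have hbound : Tendsto (fun n => ∑' i, (X n i - y i) ^ 2 +
      2 * (√(∑' i, (X n i - y i) ^ 2) * √(∑' i, y i ^ 2))) l (𝓝 0) := by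
    simpa using h.add ((h.sqrt.mul_const _).const_mul 2)
  rw [← tendsto_sub_nhds_zero_iff]
  exact squeeze_zero_norm' (hX.mono fun n hn => abs_tsum_sq_sub_tsum_sq_le hn hy) hbound

lemma tendsto_apply_of_tendsto_tsum_sq_sub (hX : ∀ᶠ n in l, Summable fun i => X n i ^ 2)
    (hy : Summable fun i => y i ^ 2) (h : Tendsto (fun n => ∑' i, (X n i - y i) ^ 2) l (𝓝 0))
    (i : ι) : Tendsto (fun n => X n i) l (𝓝 (y i)) := by
  have hbound : ∀ᶠ n in l, ‖X n i - y i‖ ≤ √(∑' j, (X n j - y j) ^ 2) :=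
    hX.mono fun n hn => Real.abs_le_sqrt
      ((summable_sq_sub hn hy).le_tsum i fun _ _ => sq_nonneg _)
  rw [← tendsto_sub_nhds_zero_iff]
  exact squeeze_zero_norm' hbound (by simpa using h.sqrt)

end SquareSummable

section HalfLine

variable {f g : ℝ → ℝ} {a t : ℝ}

lemma contDiffOn_two_iff_derivWithin {s : Set ℝ} (hs : UniqueDiffOn ℝ s) :
    ContDiffOn ℝ 2 f s ↔ DifferentiableOn ℝ f s ∧ DifferentiableOn ℝ (derivWithin f s) s ∧
      ContinuousOn (derivWithin (derivWithin f s) s) s := by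
  rw [show (2 : WithTop ℕ∞) = 1 + 1 from rfl, contDiffOn_succ_iff_derivWithin hs,
    contDiffOn_one_iff_derivWithin hs]
  simp

lemma integral_derivWithin_Ici_eq_sub (ht : a ≤ t) (hf : DifferentiableOn ℝ f (Ici a))
    (hf' : ContinuousOn (derivWithin f (Ici a)) (Ici a)) :
    ∫ x in a..t, derivWithin f (Ici a) x = f t - f a :=
  integral_eq_sub_of_hasDeriv_right_of_le ht (hf.continuousOn.mono Icc_subset_Ici_self)
    (fun x hx => (hf x (mem_Ici.2 hx.1.le)).hasDerivWithinAt.mono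
      (Ioi_subset_Ici_self.trans (Ici_subset_Ici.2 hx.1.le)))
    ((hf'.mono Icc_subset_Ici_self).intervalIntegrable_of_Icc ht)

lemma hasDerivWithinAt_integral_Ici (hg : ContinuousOn g (Ici a)) (ht : a ≤ t) :
    HasDerivWithinAt (fun u => ∫ s in a..u, g s) (g t) (Ici a) t := by
  have hint : IntervalIntegrable g volume a t :=
    (hg.mono Icc_subset_Ici_self).intervalIntegrable_of_Icc ht
  rcases ht.eq_or_lt with rfl | ht
  · exact integral_hasDerivWithinAt_right hint
      ((hg.mono Ioi_subset_Ici_self).stronglyMeasurableAtFilter_nhdsWithin measurableSet_Ioi a)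
      ((hg a self_mem_Ici).mono Ioi_subset_Ici_self)
  · exact (integral_hasDerivAt_right hint
      ((hg.mono Ioi_subset_Ici_self).stronglyMeasurableAtFilter isOpen_Ioi t ht)
      ((hg t ht.le).continuousAt (Ici_mem_nhds ht))).hasDerivWithinAt

end HalfLine

section Kirchhoff

variable {lam : ℕ → ℝ} {m : ℝ → ℝ} {u : ℕ → ℝ → ℝ} {i : ℕ} {s t : ℝ}

/-- `|A^{1/2} u(t)|²`. -/
noncomputable def aNormSq (lam : ℕ → ℝ) (u : ℕ → ℝ → ℝ) (t : ℝ) : ℝ :=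
  ∑' j, lam j ^ 2 * u j t ^ 2

noncomputable def kirchhoffTerm (m : ℝ → ℝ) (lam : ℕ → ℝ) (u : ℕ → ℝ → ℝ) (i : ℕ) (s : ℝ) :
    ℝ :=
  m (aNormSq lam u s) * lam i ^ 2 * u i s

lemma aNormSq_nonneg : 0 ≤ aNormSq lam u t :=
  tsum_nonneg fun _ => by positivity

lemma aNormSq_eq_tsum_sq : aNormSq lam u t = ∑' j, (lam j * u j t) ^ 2 := by
  simp only [aNormSq, mul_pow]

lemma kirchhoffTerm_eq :
    kirchhoffTerm m lam u i s = m (aNormSq lam u s) * lam i * (lam i * u i s) := by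
  rw [kirchhoffTerm]; ring

lemma continuousOn_aNormSq (hs : ∀ t, 0 ≤ t → Summable fun j => lam j ^ 2 * u j t ^ 2)
    (hc : ∀ t₀, 0 ≤ t₀ → Tendsto (fun t => ∑' j, lam j ^ 2 * (u j t - u j t₀) ^ 2)
      (𝓝[Ici 0] t₀) (𝓝 0)) :
    ContinuousOn (aNormSq lam u) (Ici 0) := by
  intro t₀ ht₀
  simp only [← mul_pow, mul_sub] at hs hc
  have h := tendsto_tsum_sq_of_tendsto_tsum_sq_sub (eventually_mem_nhdsWithin.mono hs) (hs t₀ ht₀)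
    (hc t₀ ht₀)
  simp only [← aNormSq_eq_tsum_sq] at h
  exact h

lemma continuousOn_kirchhoffTerm (hm : ContinuousOn m (Ici 0))
    (hσ : ContinuousOn (aNormSq lam u) (Ici 0)) (hu : ContinuousOn (u i) (Ici 0)) :
    ContinuousOn (kirchhoffTerm m lam u i) (Ici 0) :=
  ((hm.comp hσ fun _ _ => aNormSq_nonneg).mul continuousOn_const).mul hu

lemma abs_kirchhoffTerm_le {R C : ℝ} (hs : Summable fun j => lam j ^ 2 * u j s ^ 2)
    (hR : aNormSq lam u s ≤ R) (hC : |m (aNormSq lam u s)| ≤ C) :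
    |kirchhoffTerm m lam u i s| ≤ C * |lam i| * √R := by
  have hi : |lam i * u i s| ≤ √R :=
    Real.abs_le_sqrt ((mul_pow (lam i) (u i s) 2 ▸ hs.le_tsum i fun _ _ => by positivity).trans hR)
  have hC₀ : 0 ≤ C := (abs_nonneg _).trans hC
  rw [kirchhoffTerm_eq, abs_mul, abs_mul]
  exact mul_le_mul (mul_le_mul_of_nonneg_right hC (abs_nonneg _)) hi (abs_nonneg _)
    (by positivity)

lemma aNormSq_le_two_mul_add {w : ℕ → ℝ → ℝ} (hw : Summable fun j => lam j ^ 2 * w j s ^ 2)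
    (hu : Summable fun j => lam j ^ 2 * u j s ^ 2) :
    aNormSq lam w s ≤ 2 * ∑' j, lam j ^ 2 * (w j s - u j s) ^ 2 + 2 * aNormSq lam u s := by
  simp only [aNormSq_eq_tsum_sq, ← mul_pow, mul_sub] at hw hu ⊢
  exact tsum_sq_le_two_mul_tsum_sq_sub_add hw hu

variable {U : ℕ → ℕ → ℝ → ℝ}

lemma tendsto_kirchhoffTerm (hm : ContinuousOn m (Ici 0))
    (hU : ∀ n, Summable fun j => lam j ^ 2 * U n j s ^ 2)
    (hu : Summable fun j => lam j ^ 2 * u j s ^ 2)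
    (h : Tendsto (fun n => ∑' j, lam j ^ 2 * (U n j s - u j s) ^ 2) atTop (𝓝 0)) :
    Tendsto (fun n => kirchhoffTerm m lam (U n) i s) atTop (𝓝 (kirchhoffTerm m lam u i s)) := by
  simp only [← mul_pow, mul_sub] at hU hu h
  have hσ : Tendsto (fun n => aNormSq lam (U n) s) atTop (𝓝[Ici 0] (aNormSq lam u s)) :=
    tendsto_nhdsWithin_iff.2 ⟨by simpa only [aNormSq_eq_tsum_sq] using
      tendsto_tsum_sq_of_tendsto_tsum_sq_sub (.of_forall hU) hu h,
      .of_forall fun _ => aNormSq_nonneg⟩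
  have hi := tendsto_apply_of_tendsto_tsum_sq_sub (.of_forall hU) hu h i
  simpa only [kirchhoffTerm_eq, Function.comp_apply] using
    (((hm _ aNormSq_nonneg).tendsto.comp hσ).mul_const (lam i)).mul hi

lemma tendsto_integral_kirchhoffTerm (hm : ContinuousOn m (Ici 0)) (ht : 0 ≤ t) (i : ℕ)
    (hUi : ∀ n, ContinuousOn (kirchhoffTerm m lam (U n) i) (Ici 0))
    (hU : ∀ n s, 0 ≤ s → Summable fun j => lam j ^ 2 * U n j s ^ 2)
    (hu : ∀ s, 0 ≤ s → Summable fun j => lam j ^ 2 * u j s ^ 2)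
    (hσ : ContinuousOn (aNormSq lam u) (Ici 0))
    (h : TendstoUniformlyOn (fun n s => ∑' j, lam j ^ 2 * (U n j s - u j s) ^ 2) 0 atTop
      (Icc 0 t)) :
    Tendsto (fun n => ∫ s in 0..t, kirchhoffTerm m lam (U n) i s) atTop
      (𝓝 (∫ s in 0..t, kirchhoffTerm m lam u i s)) := by
  obtain ⟨K, hK⟩ := isCompact_Icc.exists_bound_of_continuousOn (hσ.mono Icc_subset_Ici_self)
  obtain ⟨C, hC⟩ := isCompact_Icc.exists_bound_of_continuousOn
    (hm.mono (Icc_subset_Ici_self : Icc 0 (2 + 2 * K) ⊆ Ici 0))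
  have hUσ : ∀ᶠ n in atTop, ∀ s ∈ Icc 0 t, aNormSq lam (U n) s ≤ 2 + 2 * K := by
    filter_upwards [Metric.tendstoUniformlyOn_iff.1 h 1 one_pos] with n hn s hs
    have hE := hn s hs
    rw [Pi.zero_apply, dist_zero_left, Real.norm_of_nonneg (tsum_nonneg fun _ => by positivity)]
      at hE
    linarith [aNormSq_le_two_mul_add (hU n s hs.1) (hu s hs.1), le_of_abs_le (hK s hs)]
  have hIoc : uIoc 0 t ⊆ Icc 0 t := by rw [uIoc_of_le ht]; exact Ioc_subset_Icc_self
  refine tendsto_integral_filter_of_dominated_convergence (fun _ => C * |lam i| * √(2 + 2 * K))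
    (.of_forall fun n => ((hUi n).mono (hIoc.trans Icc_subset_Ici_self)).aestronglyMeasurable
      measurableSet_uIoc) ?_ intervalIntegrable_const
    (ae_of_all _ fun s hs => tendsto_kirchhoffTerm hm (fun n => hU n s (hIoc hs).1)
      (hu s (hIoc hs).1) (h.tendsto_at (hIoc hs)))
  filter_upwards [hUσ] with n hn
  refine ae_of_all _ fun s hs => abs_kirchhoffTerm_le (hU n s (hIoc hs).1) (hn s (hIoc hs)) ?_
  exact hC _ ⟨aNormSq_nonneg, hn s (hIoc hs)⟩

variable {a b : ℕ → ℝ}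

lemma WeakSol.continuousOn_kirchhoffTerm (hu : WeakSol lam m a b u) (hm : ContinuousOn m (Ici 0))
    (i : ℕ) : ContinuousOn (kirchhoffTerm m lam u i) (Ici 0) :=
  _root_.continuousOn_kirchhoffTerm hm (continuousOn_aNormSq hu.2.2.2.2.1 hu.2.2.2.2.2.2.1)
    ((hu.1 i).continuousOn)

lemma WeakSol.derIci_eq_sub_integral (hu : WeakSol lam m a b u) (i : ℕ) (ht : 0 ≤ t) :
    derIci (u i) t = derIci (u i) 0 - ∫ s in 0..t, kirchhoffTerm m lam u i s := by
  obtain ⟨-, hd', hc''⟩ := (contDiffOn_two_iff_derivWithin (uniqueDiffOn_Ici 0)).1 (hu.1 i)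
  have hftc : ∫ s in 0..t, derIci (derIci (u i)) s = derIci (u i) t - derIci (u i) 0 :=
    integral_derivWithin_Ici_eq_sub ht hd' hc''
  have hode : EqOn (derIci (derIci (u i))) (fun s => -kirchhoffTerm m lam u i s)
      (uIcc 0 t) := fun s hs => by
    rw [uIcc_of_le ht] at hs
    exact eq_neg_of_add_eq_zero_left (hu.2.2.2.2.2.2.2 i s hs.1)
  rw [integral_congr hode, intervalIntegral.integral_neg] at hftc
  linarith

lemma weakSol_of_derIci_eq_sub_integral {v : ℕ → ℝ → ℝ} (hm : ContinuousOn m (Ici 0))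
    (hdiff : ∀ i, DifferentiableOn ℝ (v i) (Ici 0))
    (hv0 : ∀ i, v i 0 = a i) (hv1 : ∀ i, derIci (v i) 0 = b i)
    (hs1 : ∀ t, 0 ≤ t → Summable fun i => derIci (v i) t ^ 2)
    (hs2 : ∀ t, 0 ≤ t → Summable fun i => lam i ^ 2 * v i t ^ 2)
    (hc1 : ∀ t₀, 0 ≤ t₀ → Tendsto (fun t => ∑' i, (derIci (v i) t - derIci (v i) t₀) ^ 2)
      (𝓝[Ici 0] t₀) (𝓝 0))
    (hc2 : ∀ t₀, 0 ≤ t₀ → Tendsto (fun t => ∑' i, lam i ^ 2 * (v i t - v i t₀) ^ 2)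
      (𝓝[Ici 0] t₀) (𝓝 0))
    (hv : ∀ i t, 0 ≤ t →
      derIci (v i) t = derIci (v i) 0 - ∫ s in 0..t, kirchhoffTerm m lam v i s) :
    WeakSol lam m a b v := by
  have hK : ∀ i, ContinuousOn (kirchhoffTerm m lam v i) (Ici 0) := fun i =>
    continuousOn_kirchhoffTerm hm (continuousOn_aNormSq hs2 hc2) (hdiff i).continuousOn
  have hder : ∀ i t, 0 ≤ t →
      HasDerivWithinAt (derIci (v i)) (-kirchhoffTerm m lam v i t) (Ici 0) t := fun i t ht =>
    ((hasDerivWithinAt_integral_Ici (hK i) ht).const_sub _).congr (fun s hs => hv i s hs)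
      (hv i t ht)
  have hder2 : ∀ i t, 0 ≤ t → derIci (derIci (v i)) t = -kirchhoffTerm m lam v i t :=
    fun i t ht => (hder i t ht).derivWithin (uniqueDiffOn_Ici 0 t ht)
  refine ⟨fun i => (contDiffOn_two_iff_derivWithin (uniqueDiffOn_Ici 0)).2
      ⟨hdiff i, fun t ht => (hder i t ht).differentiableWithinAt,
        (hK i).neg.congr fun t ht => hder2 i t ht⟩,
    hv0, hv1, hs1, hs2, hc1, hc2, fun i t ht => ?_⟩
  rw [hder2 i t ht, kirchhoffTerm, aNormSq, neg_add_cancel]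

end Kirchhoff

lemma tendstoUniformlyOn_Icc_of_add_le {f g : ℕ → ℝ → ℝ} (hf : ∀ n t, 0 ≤ f n t)
    (hg : ∀ n t, 0 ≤ g n t)
    (h : ∀ T : ℝ, 0 < T → ∀ ε : ℝ, 0 < ε → ∃ N : ℕ, ∀ n, N ≤ n →
      ∀ t, 0 ≤ t → t ≤ T → f n t + g n t ≤ ε) (T : ℝ) :
    TendstoUniformlyOn f 0 atTop (Icc 0 T) := by
  rw [Metric.tendstoUniformlyOn_iff]
  intro ε hε
  obtain ⟨N, hN⟩ := h (max T 1) (by positivity) (ε / 2) (by positivity)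
  filter_upwards [eventually_ge_atTop N] with n hn t ht
  rw [Pi.zero_apply, dist_zero_left, Real.norm_of_nonneg (hf n t)]
  linarith [hN n hn t ht.1 (ht.2.trans (le_max_left _ _)), hg n t]

theorem stmt16_general (lam : ℕ → ℝ) (m : ℝ → ℝ)
    (hm_reg : ContDiffOn ℝ 1 m (Set.Ici 0))
    (V : ℕ → ℕ → ℝ → ℝ) (A B : ℕ → ℕ → ℝ)
    (hV : ∀ n, WeakSol lam m (A n) (B n) (V n))
    (v : ℕ → ℝ → ℝ) (a b : ℕ → ℝ)
    (hdiff : ∀ i, DifferentiableOn ℝ (v i) (Set.Ici 0))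
    (hv0 : ∀ i, v i 0 = a i) (hv1 : ∀ i, derIci (v i) 0 = b i)
    (hs1 : ∀ t, 0 ≤ t → Summable fun i => (derIci (v i) t) ^ 2)
    (hs2 : ∀ t, 0 ≤ t → Summable fun i => (lam i) ^ 2 * (v i t) ^ 2)
    (hc1 : ∀ t₀, 0 ≤ t₀ →
      Tendsto (fun t => ∑' i, (derIci (v i) t - derIci (v i) t₀) ^ 2)
        (nhdsWithin t₀ (Set.Ici 0)) (nhds 0))
    (hc2 : ∀ t₀, 0 ≤ t₀ →
      Tendsto (fun t => ∑' i, (lam i) ^ 2 * (v i t - v i t₀) ^ 2)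
        (nhdsWithin t₀ (Set.Ici 0)) (nhds 0))
    (hconv : ∀ T : ℝ, 0 < T → ∀ ε : ℝ, 0 < ε → ∃ N : ℕ, ∀ n, N ≤ n →
      ∀ t, 0 ≤ t → t ≤ T →
        (∑' i, (derIci (V n i) t - derIci (v i) t) ^ 2)
            + (∑' i, (lam i) ^ 2 * (V n i t - v i t) ^ 2) ≤ ε) :
    WeakSol lam m a b v := by
  have hm : ContinuousOn m (Ici 0) := hm_reg.continuousOn
  have hE₁ := tendstoUniformlyOn_Icc_of_add_le (fun _ _ => tsum_nonneg fun _ => sq_nonneg _)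
    (fun _ _ => tsum_nonneg fun _ => by positivity) hconv
  have hE₂ := tendstoUniformlyOn_Icc_of_add_le (fun _ _ => tsum_nonneg fun _ => by positivity)
    (fun _ _ => tsum_nonneg fun _ => sq_nonneg _) fun T hT ε hε => (hconv T hT ε hε).imp
      fun _ hN n hn t h₀ hT => (add_comm _ _).trans_le (hN n hn t h₀ hT)
  refine weakSol_of_derIci_eq_sub_integral hm hdiff hv0 hv1 hs1 hs2 hc1 hc2 fun i t ht => ?_
  have hder : ∀ s, 0 ≤ s → Tendsto (fun n => derIci (V n i) s) atTop (𝓝 (derIci (v i) s)) :=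
    fun s hs => tendsto_apply_of_tendsto_tsum_sq_sub (.of_forall fun n => (hV n).2.2.2.1 s hs)
      (hs1 s hs) ((hE₁ s).tendsto_at ⟨hs, le_rfl⟩) i
  refine tendsto_nhds_unique (hder t ht) ?_
  simp only [fun n => (hV n).derIci_eq_sub_integral i ht]
  exact (hder 0 le_rfl).sub (tendsto_integral_kirchhoffTerm hm ht i
    (fun n => (hV n).continuousOn_kirchhoffTerm hm i) (fun n => (hV n).2.2.2.2.1) hs2
    (continuousOn_aNormSq hs2 hc2) (hE₂ t))

/-- a limit of global weak solutions (uniformly on bounded time intervals,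
in the energy norm) is again a global weak solution. -/
theorem stmt16 (lam : ℕ → ℝ) (hpos : ∀ i, 0 < lam i) (hmono : Monotone lam)
    (htop : Tendsto lam atTop atTop)
    (μ₁ : ℝ) (hμ₁ : 0 < μ₁) (m : ℝ → ℝ)
    (hm_reg : ContDiffOn ℝ 1 m (Set.Ici 0))
    (hm_lb : ∀ σ, 0 ≤ σ → μ₁ ≤ m σ)
    (V : ℕ → ℕ → ℝ → ℝ) (A B : ℕ → ℕ → ℝ)
    (hVen : ∀ n, InEnergy lam (A n) (B n))
    (hV : ∀ n, WeakSol lam m (A n) (B n) (V n))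
    (v : ℕ → ℝ → ℝ) (a b : ℕ → ℝ) (hab : InEnergy lam a b)
    (hdiff : ∀ i, DifferentiableOn ℝ (v i) (Set.Ici 0))
    (hv0 : ∀ i, v i 0 = a i) (hv1 : ∀ i, derIci (v i) 0 = b i)
    (hs1 : ∀ t, 0 ≤ t → Summable fun i => (derIci (v i) t) ^ 2)
    (hs2 : ∀ t, 0 ≤ t → Summable fun i => (lam i) ^ 2 * (v i t) ^ 2)
    (hc1 : ∀ t₀, 0 ≤ t₀ →
      Tendsto (fun t => ∑' i, (derIci (v i) t - derIci (v i) t₀) ^ 2)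
        (nhdsWithin t₀ (Set.Ici 0)) (nhds 0))
    (hc2 : ∀ t₀, 0 ≤ t₀ →
      Tendsto (fun t => ∑' i, (lam i) ^ 2 * (v i t - v i t₀) ^ 2)
        (nhdsWithin t₀ (Set.Ici 0)) (nhds 0))
    (hconv : ∀ T : ℝ, 0 < T → ∀ ε : ℝ, 0 < ε → ∃ N : ℕ, ∀ n, N ≤ n →
      ∀ t, 0 ≤ t → t ≤ T →
        (∑' i, (derIci (V n i) t - derIci (v i) t) ^ 2)
            + (∑' i, (lam i) ^ 2 * (V n i t - v i t) ^ 2) ≤ ε) :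
    WeakSol lam m a b v :=
  stmt16_general lam m hm_reg V A B hV v a b hdiff hv0 hv1 hs1 hs2 hc1 hc2 hconv
end
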